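/- Let I be a monomial ideal in S = K[x_1,…,x_n], and let F: I = I_0 ⊂ I_1 ⊂ ⋯ ⊂ I_r = S be a filtration with I_j = (I_{j−1}, u_j) for monomials u_j ∈ S. Define the polarized filtration F^p: I^p = J_0 ⊂ J_1 ⊂ ⋯ ⊂ J_r = T by J_j = (J_{j−1}, u_j^p). Then F is a prime filtration of S/I (i.e., every I_{j−1} : u_j is a prime ideal) if and only if F^p is a prime filtration of T/I^p (i.e., every J_{j−1} : u_j^p is a prime ideal). -/

import Mathlib

open MvPolynomial

/-- The monomial `x^a` in `K[x_i : i ∈ σ]`. -/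
noncomputable def mono (K : Type*) [Field K] {σ : Type*} (a : σ →₀ ℕ) :
    MvPolynomial σ K :=
  MvPolynomial.monomial a 1

/-- An ideal is a monomial ideal if it is generated by monomials. -/
def IsMonomialIdeal {K : Type*} [Field K] {σ : Type*}
    (I : Ideal (MvPolynomial σ K)) : Prop :=
  ∃ A : Set (σ →₀ ℕ), I = Ideal.span ((fun a => mono K a) '' A)

/-- `IsPrimeFiltration I c u` says that `c` is a chain of (monomial) ideals
`I = I₀ ⊆ I₁ ⊆ ⋯ ⊆ I_r = S` with `I_j = I_{j-1} + (x^{u j})` and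
`I_{j-1} : x^{u j}` a prime ideal, i.e. `I_j/I_{j-1} ≅ S/P_j`. -/
def IsPrimeFiltration {K : Type*} [Field K] {σ : Type*}
    (I : Ideal (MvPolynomial σ K)) {r : ℕ}
    (c : Fin (r + 1) → Ideal (MvPolynomial σ K)) (u : Fin r → (σ →₀ ℕ)) : Prop :=
  c 0 = I ∧ c (Fin.last r) = ⊤ ∧
    (∀ j : Fin r, c j.succ = c j.castSucc ⊔ Ideal.span {mono K (u j)}) ∧
    (∀ j : Fin r, ((c j.castSucc).colon (Ideal.span {mono K (u j)})).IsPrime)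

/-- The `j`-th prime factor `P_j = I_{j-1} : u_j` of a prime filtration. -/
noncomputable def filtFactor {K : Type*} [Field K] {σ : Type*} {r : ℕ}
    (c : Fin (r + 1) → Ideal (MvPolynomial σ K)) (u : Fin r → (σ →₀ ℕ)) (j : Fin r) :
    Ideal (MvPolynomial σ K) :=
  (c j.castSucc).colon (Ideal.span {mono K (u j)})

/-- A prime filtration is pretty clean if `i < j` and `P_i ⊆ P_j` imply `P_i = P_j`. -/
def IsPrettyCleanFiltration {K : Type*} [Field K] {σ : Type*}
    (I : Ideal (MvPolynomial σ K)) {r : ℕ}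
    (c : Fin (r + 1) → Ideal (MvPolynomial σ K)) (u : Fin r → (σ →₀ ℕ)) : Prop :=
  IsPrimeFiltration I c u ∧
    ∀ i j : Fin r, i < j → filtFactor c u i ≤ filtFactor c u j →
      filtFactor c u i = filtFactor c u j

/-- A monomial ideal is pretty clean if it admits a pretty clean filtration. -/
def IsPrettyClean {K : Type*} [Field K] {σ : Type*}
    (I : Ideal (MvPolynomial σ K)) : Prop :=
  ∃ (r : ℕ) (c : Fin (r + 1) → Ideal (MvPolynomial σ K)) (u : Fin r → (σ →₀ ℕ)),
    IsPrettyCleanFiltration I c u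

/-- A prime filtration is clean if its support is the set of minimal primes of `I`. -/
def IsCleanFiltration {K : Type*} [Field K] {σ : Type*}
    (I : Ideal (MvPolynomial σ K)) {r : ℕ}
    (c : Fin (r + 1) → Ideal (MvPolynomial σ K)) (u : Fin r → (σ →₀ ℕ)) : Prop :=
  IsPrimeFiltration I c u ∧
    {P | ∃ j : Fin r, filtFactor c u j = P} = I.minimalPrimes

/-- A monomial ideal is clean if it admits a clean filtration. -/
def IsClean {K : Type*} [Field K] {σ : Type*}
    (I : Ideal (MvPolynomial σ K)) : Prop :=
  ∃ (r : ℕ) (c : Fin (r + 1) → Ideal (MvPolynomial σ K)) (u : Fin r → (σ →₀ ℕ)),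
    IsCleanFiltration I c u

/-- The exponent vector of the polarization `u^p = ∏ᵢ ∏_{j<aᵢ} x_{ij}` of the
monomial `u = ∏ᵢ xᵢ^{aᵢ}`: the squarefree exponent supported on
`{(i,j) : j < a i}`, in the variables of `T = K[x_{ij}]`. -/
noncomputable def polarExp {n : ℕ} (a : Fin n →₀ ℕ) : (Fin n × ℕ) →₀ ℕ :=
  Finsupp.indicator
    (a.support.biUnion fun i => (Finset.range (a i)).image fun j => (i, j))
    (fun _ _ => 1)

/-- The polarization `I^p ⊂ T = K[x_{ij}]` of a monomial ideal `I ⊂ S`: the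
ideal generated by the polarizations of the monomials of `I` (for a monomial
ideal this is the ideal generated by the polarizations of any set of monomial
generators). -/
noncomputable def polarIdeal {K : Type*} [Field K] {n : ℕ}
    (I : Ideal (MvPolynomial (Fin n) K)) : Ideal (MvPolynomial (Fin n × ℕ) K) :=
  Ideal.span ((fun a => mono K (polarExp a)) '' {a : Fin n →₀ ℕ | mono K a ∈ I})

/-!
`I_{j-1}` and `J_{j-1}` are generated by a set `A` of monomials and by its polarization. The colon
of a monomial ideal by `x^u` is generated by the `x^(a - u)`, and a monomial ideal is prime iff each
of its generators is divisible by a variable that is itself a generator. Since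
`polarExp a - polarExp u` is the indicator of `{(i, j) | u i ≤ j < a i}`, it is the variable
`x_{(i, k)}` iff `k = u i` and `a - u` is the variable `x_i`; hence the two colons are prime
simultaneously. Likewise `I_r = S` iff `0 ∈ A` iff `J_r = T`.
-/

section MonomialIdeal

variable {K : Type*} [Field K] {σ : Type*}

theorem mono_add (a b : σ →₀ ℕ) : mono K (a + b) = mono K a * mono K b := by
  rw [mono, mono, mono, monomial_mul, one_mul]

theorem mono_single_one (i : σ) : mono K (Finsupp.single i 1) = X i := rfl

theorem mem_span_mono_iff {A : Set (σ →₀ ℕ)} {p : MvPolynomial σ K} :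
    p ∈ Ideal.span ((fun a => mono K a) '' A) ↔ ∀ v ∈ p.support, ∃ a ∈ A, a ≤ v :=
  mem_ideal_span_monomial_image

theorem mono_mem_span_mono_iff {A : Set (σ →₀ ℕ)} {b : σ →₀ ℕ} :
    mono K b ∈ Ideal.span ((fun a => mono K a) '' A) ↔ ∃ a ∈ A, a ≤ b := by
  classical
  rw [mem_span_mono_iff, mono, support_monomial, if_neg one_ne_zero]
  simp

theorem span_mono_eq_top_iff {A : Set (σ →₀ ℕ)} :
    Ideal.span ((fun a => mono K a) '' A) = ⊤ ↔ (0 : σ →₀ ℕ) ∈ A := by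
  have h1 : mono K (0 : σ →₀ ℕ) = 1 := rfl
  rw [Ideal.eq_top_iff_one, ← h1, mono_mem_span_mono_iff]
  simp only [nonpos_iff_eq_zero, exists_eq_right]

theorem span_mono_colon_span_mono (A : Set (σ →₀ ℕ)) (u : σ →₀ ℕ) :
    (Ideal.span ((fun a => mono K a) '' A)).colon (Ideal.span {mono K u}) =
      Ideal.span ((fun a => mono K a) '' ((· - u) '' A)) := by
  ext p
  rw [Ideal.mem_colon_span_singleton, mem_span_mono_iff, mem_span_mono_iff, mono]
  simp only [Set.exists_mem_image, tsub_le_iff_right, mem_support_iff, coeff_mul_monomial',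
    mul_one]
  constructor
  · intro h v hv
    simpa using h (v + u) (by simpa using hv)
  · intro h w hw
    split_ifs at hw with hu
    · simpa [tsub_add_cancel_of_le hu] using h (w - u) hw
    · exact absurd rfl hw

theorem isPrime_span_X_image (V : Set σ) :
    (Ideal.span (X '' V : Set (MvPolynomial σ K))).IsPrime := by
  classical
  set Q := Ideal.span (X '' V : Set (MvPolynomial σ K))
  set φ : MvPolynomial σ K →ₐ[K] MvPolynomial σ K := aeval fun i => if i ∈ V then 0 else X i
  -- killing the variables of `V` does not change a polynomial modulo `Q`
  have hφ : (Ideal.Quotient.mkₐ K Q).comp φ = Ideal.Quotient.mkₐ K Q := by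
    refine algHom_ext fun i => ?_
    by_cases hi : i ∈ V
    · simpa [φ, hi, eq_comm (a := (0 : MvPolynomial σ K ⧸ Q)), Ideal.Quotient.eq_zero_iff_mem]
        using Ideal.subset_span (Set.mem_image_of_mem X hi)
    · simp [φ, hi]
  suffices Q = RingHom.ker φ from this ▸ RingHom.ker_isPrime _
  refine le_antisymm (Ideal.span_le.mpr ?_) fun p hp => ?_
  · rintro _ ⟨i, hi, rfl⟩
    simp [φ, hi]
  · rw [← Ideal.Quotient.eq_zero_iff_mem, ← Ideal.Quotient.mkₐ_eq_mk K, ← hφ,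
      AlgHom.comp_apply, (RingHom.mem_ker).mp hp, map_zero]

theorem Finsupp.eq_single_one_of_le_single_one {a : σ →₀ ℕ} {i : σ} (h : a ≤ Finsupp.single i 1)
    (ha : a ≠ 0) : a = Finsupp.single i 1 := by
  have hsupp : a.support ⊆ {i} := fun j hj => Finset.mem_singleton.mpr <| by
    by_contra hji
    have := h j
    simp_all
  obtain ⟨j, hj⟩ := Finsupp.support_nonempty_iff.mpr ha
  obtain rfl := Finset.mem_singleton.mp (hsupp hj)
  refine Finsupp.eq_single_iff.mpr ⟨hsupp, ?_⟩
  have := h j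
  simp only [Finsupp.single_eq_same] at this
  simp only [Finsupp.mem_support_iff] at hj
  omega

theorem isPrime_span_mono_iff {B : Set (σ →₀ ℕ)} :
    (Ideal.span ((fun a => mono K a) '' B)).IsPrime ↔
      ∀ b ∈ B, ∃ i, Finsupp.single i 1 ≤ b ∧ Finsupp.single i 1 ∈ B := by
  set P := Ideal.span ((fun a => mono K a) '' B)
  constructor
  · intro hP b hb
    have hbP : ∏ i ∈ b.support, (X i : MvPolynomial σ K) ^ b i ∈ P := by
      have : mono K b ∈ P := Ideal.subset_span (Set.mem_image_of_mem _ hb)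
      rwa [mono, monomial_eq, C_1, one_mul] at this
    obtain ⟨i, hi, hXi⟩ := hP.prod_mem_iff.mp hbP
    have hXP : mono K (Finsupp.single i 1) ∈ P := hP.mem_of_pow_mem _ hXi
    obtain ⟨a, ha, hle⟩ := mono_mem_span_mono_iff.mp hXP
    have ha0 : a ≠ 0 := fun h => hP.ne_top (span_mono_eq_top_iff.mpr (h ▸ ha))
    refine ⟨i, Finsupp.single_le_iff.mpr ?_, Finsupp.eq_single_one_of_le_single_one hle ha0 ▸ ha⟩
    exact Nat.one_le_iff_ne_zero.mpr (Finsupp.mem_support_iff.mp hi)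
  · intro h
    suffices P = Ideal.span (X '' {i | Finsupp.single i 1 ∈ B}) from
      this ▸ isPrime_span_X_image _
    refine le_antisymm (Ideal.span_le.mpr ?_) (Ideal.span_le.mpr ?_)
    · rintro _ ⟨b, hb, rfl⟩
      obtain ⟨i, hle, hi⟩ := h b hb
      show mono K b ∈ _
      rw [← tsub_add_cancel_of_le hle, mono_add, mono_single_one]
      exact Ideal.mul_mem_left _ _ (Ideal.subset_span ⟨i, hi, rfl⟩)
    · rintro _ ⟨i, hi, rfl⟩
      exact Ideal.subset_span ⟨_, hi, mono_single_one i⟩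

theorem filtration_eq_span_mono {r : ℕ} (A : Set (σ →₀ ℕ)) (u : Fin r → σ →₀ ℕ)
    (c : Fin (r + 1) → Ideal (MvPolynomial σ K))
    (hc0 : c 0 = Ideal.span ((fun a => mono K a) '' A))
    (hcs : ∀ j : Fin r, c j.succ = c j.castSucc ⊔ Ideal.span {mono K (u j)}) (j : Fin (r + 1)) :
    c j = Ideal.span ((fun a => mono K a) '' (A ∪ u '' {i | i.castSucc < j})) := by
  induction j using Fin.induction with
  | zero => simpa using hc0
  | succ j ih =>
    have hlt : {i : Fin r | i.castSucc < j.succ} = insert j {i | i.castSucc < j.castSucc} := by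
      ext i
      simp [Fin.castSucc_lt_succ_iff, le_iff_lt_or_eq, or_comm]
    rw [hcs, ih, hlt, Set.image_insert_eq, Set.union_insert, Set.image_insert_eq,
      Ideal.span_insert, sup_comm]

end MonomialIdeal

section Polarization

variable {n : ℕ}

theorem polarExp_apply (a : Fin n →₀ ℕ) (i : Fin n) (j : ℕ) :
    polarExp a (i, j) = if j < a i then 1 else 0 := by
  simp only [polarExp, Finsupp.indicator_apply, Finset.mem_biUnion, Finset.mem_image,
    Finset.mem_range, Finsupp.mem_support_iff, Prod.mk.injEq]
  exact if_congr ⟨fun ⟨_, _, _, hk, hi, hj⟩ => hi ▸ hj ▸ hk, fun h => ⟨i, by omega, j, h, rfl, rfl⟩⟩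
    rfl rfl

theorem polarExp_le_polarExp_iff {a b : Fin n →₀ ℕ} : polarExp a ≤ polarExp b ↔ a ≤ b := by
  simp only [Finsupp.le_def, Prod.forall, polarExp_apply]
  refine ⟨fun h i => ?_, fun h i j => ?_⟩
  · have := h i (b i)
    split_ifs at this <;> omega
  · have := h i
    split_ifs <;> omega

theorem polarExp_eq_zero_iff {a : Fin n →₀ ℕ} : polarExp a = 0 ↔ a = 0 := by
  have h0 : polarExp (0 : Fin n →₀ ℕ) = 0 := by ext ⟨i, j⟩; simp [polarExp_apply]
  rw [← h0, ← nonpos_iff_eq_zero (a := a), ← polarExp_le_polarExp_iff, h0, nonpos_iff_eq_zero]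

theorem polarExp_tsub_apply (a u : Fin n →₀ ℕ) (i : Fin n) (j : ℕ) :
    (polarExp a - polarExp u) (i, j) = if u i ≤ j ∧ j < a i then 1 else 0 := by
  rw [Finsupp.tsub_apply, polarExp_apply, polarExp_apply]
  split_ifs <;> omega

theorem single_le_polarExp_tsub_iff {a u : Fin n →₀ ℕ} {i : Fin n} {k : ℕ} :
    Finsupp.single (i, k) 1 ≤ polarExp a - polarExp u ↔ u i ≤ k ∧ k < a i := by
  rw [Finsupp.single_le_iff, polarExp_tsub_apply]
  split_ifs <;> simp_all

theorem polarExp_tsub_eq_single_iff {a u : Fin n →₀ ℕ} {i : Fin n} {k : ℕ} :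
    polarExp a - polarExp u = Finsupp.single (i, k) 1 ↔ k = u i ∧ a - u = Finsupp.single i 1 := by
  constructor
  · intro h
    have H : ∀ i' j, u i' ≤ j → j < a i' → i' = i ∧ j = k := fun i' j h1 h2 => by
      have := single_le_polarExp_tsub_iff.mpr ⟨h1, h2⟩
      rw [h, Finsupp.single_le_iff, Finsupp.single_apply] at this
      split_ifs at this with hik
      · exact ⟨(Prod.ext_iff.mp hik).1.symm, (Prod.ext_iff.mp hik).2.symm⟩
      · omega
    have hk := single_le_polarExp_tsub_iff.mp h.ge
    obtain ⟨-, rfl⟩ := H i (u i) le_rfl (by omega)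
    refine ⟨rfl, Finsupp.ext fun i' => ?_⟩
    rw [Finsupp.tsub_apply, Finsupp.single_apply]
    split_ifs with hi
    · subst hi
      have := H i (u i + 1)
      omega
    · have := H i' (u i')
      grind
  · rintro ⟨rfl, h⟩
    ext ⟨i', j⟩
    have := DFunLike.congr_fun h i'
    rw [polarExp_tsub_apply, Finsupp.single_apply]
    rw [Finsupp.tsub_apply, Finsupp.single_apply] at this
    split_ifs at this ⊢ <;> simp_all <;> omega

variable {K : Type*} [Field K]

theorem polarIdeal_span_mono (A : Set (Fin n →₀ ℕ)) :
    polarIdeal (Ideal.span ((fun a => mono K a) '' A)) =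
      Ideal.span ((fun a => mono K a) '' (polarExp '' A)) := by
  refine le_antisymm (Ideal.span_le.mpr ?_) (Ideal.span_mono ?_)
  · rintro _ ⟨b, hb, rfl⟩
    obtain ⟨a, ha, hab⟩ := mono_mem_span_mono_iff.mp hb
    exact mono_mem_span_mono_iff.mpr ⟨_, ⟨a, ha, rfl⟩, polarExp_le_polarExp_iff.mpr hab⟩
  · rintro _ ⟨_, ⟨a, ha, rfl⟩, rfl⟩
    exact ⟨a, Ideal.subset_span ⟨a, ha, rfl⟩, rfl⟩

theorem isPrime_colon_polarExp_iff (A : Set (Fin n →₀ ℕ)) (u : Fin n →₀ ℕ) :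
    ((Ideal.span ((fun a => mono K a) '' (polarExp '' A))).colon
        (Ideal.span {mono K (polarExp u)})).IsPrime ↔
      ((Ideal.span ((fun a => mono K a) '' A)).colon (Ideal.span {mono K u})).IsPrime := by
  rw [span_mono_colon_span_mono, span_mono_colon_span_mono, isPrime_span_mono_iff,
    isPrime_span_mono_iff, Set.image_image, Set.forall_mem_image, Set.forall_mem_image]
  simp only [Set.mem_image]
  refine forall₂_congr fun a _ => ⟨?_, ?_⟩
  · rintro ⟨⟨i, k⟩, hle, a', ha', heq⟩
    obtain ⟨rfl, hau⟩ := polarExp_tsub_eq_single_iff.mp heq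
    refine ⟨i, ?_, a', ha', hau⟩
    rw [Finsupp.single_le_iff, Finsupp.tsub_apply]
    have := single_le_polarExp_tsub_iff.mp hle
    omega
  · rintro ⟨i, hle, a', ha', heq⟩
    refine ⟨(i, u i), ?_, a', ha', polarExp_tsub_eq_single_iff.mpr ⟨rfl, heq⟩⟩
    rw [Finsupp.single_le_iff, Finsupp.tsub_apply] at hle
    exact single_le_polarExp_tsub_iff.mpr ⟨le_rfl, by omega⟩

end Polarization

/-- Let `F : I = I₀ ⊂ I₁ ⊂ ⋯ ⊂ I_r = S` with
`I_j = (I_{j-1}, u_j)`, and let `F^p : I^p = J₀ ⊂ J₁ ⊂ ⋯ ⊂ J_r = T` with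
`J_j = (J_{j-1}, u_j^p)` be its polarization. Then `F` is a prime filtration of
`S/I` if and only if `F^p` is a prime filtration of `T/I^p`. -/
theorem polarized_filtration_prime_iff
    {K : Type*} [Field K] {n : ℕ} (I : Ideal (MvPolynomial (Fin n) K))
    (hI : IsMonomialIdeal I) {r : ℕ} (u : Fin r → (Fin n →₀ ℕ))
    (c : Fin (r + 1) → Ideal (MvPolynomial (Fin n) K))
    (d : Fin (r + 1) → Ideal (MvPolynomial (Fin n × ℕ) K))
    (hc0 : c 0 = I)
    (hcs : ∀ j : Fin r, c j.succ = c j.castSucc ⊔ Ideal.span {mono K (u j)})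
    (hd0 : d 0 = polarIdeal I)
    (hds : ∀ j : Fin r,
      d j.succ = d j.castSucc ⊔ Ideal.span {mono K (polarExp (u j))}) :
    IsPrimeFiltration I c u ↔
      IsPrimeFiltration (polarIdeal I) d (fun j => polarExp (u j)) := by
  obtain ⟨A, rfl⟩ := hI
  have hc := filtration_eq_span_mono A u c hc0 hcs
  have hd (j : Fin (r + 1)) : d j = Ideal.span ((fun a => mono K a) ''
      (polarExp '' (A ∪ u '' {i | i.castSucc < j}))) := by
    rw [filtration_eq_span_mono _ _ d (hd0.trans (polarIdeal_span_mono A)) hds j,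
      Set.image_union polarExp, Set.image_image polarExp]
  simp only [IsPrimeFiltration, hc0, hd0, hcs, hds, implies_true, true_and]
  refine and_congr ?_ (forall_congr' fun j => ?_)
  · rw [hc, hd, span_mono_eq_top_iff, span_mono_eq_top_iff]
    simp [polarExp_eq_zero_iff]
  · rw [hc, hd, isPrime_colon_polarExp_iff]
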